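/- Correctness of enumeration of models (semantic form of Theorem 1 for procedure A1): let P be a normal logic program, k ≥ 1, and I_1, …, I_k ∈ SM(P) (each finite) such that SM(P ∪ {Constraint(I_1), …, Constraint(I_k)}) = ∅. Then CC(P) = I_1 ∩ … ∩ I_k; in particular, for any set Q of atoms, Q ∩ CC(P) = Q ∩ I_1 ∩ … ∩ I_k. -/

import Mathlib

/-- A rule of a normal logic program: head atom, positive body, negative body. -/
structure Rule (A : Type) where
  head : A
  pos : Finset A
  neg : Finset A

/-- An interpretation `I` is a model of a rule `r`: the head is true whenever the
positive body is contained in `I` and the negative body is disjoint from `I`. -/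
def modelsRule {A : Type} (I : Set A) (r : Rule A) : Prop :=
  ((↑r.pos : Set A) ⊆ I ∧ ∀ a ∈ r.neg, a ∉ I) → r.head ∈ I

/-- `I` is a model of the program `P`. -/
def modelsProg {A : Type} (I : Set A) (P : Set (Rule A)) : Prop :=
  ∀ r ∈ P, modelsRule I r

/-- The Gelfond–Lifschitz reduct `P^I`: delete rules whose negative body meets `I`,
and drop the negative body of the remaining rules. -/
def reduct {A : Type} (P : Set (Rule A)) (I : Set A) : Set (Rule A) :=
  {r' | ∃ r ∈ P, (∀ a ∈ r.neg, a ∉ I) ∧ r' = Rule.mk r.head r.pos ∅}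

/-- `M` is a stable model of `P` (with falsum atom `bot`): `M` is an interpretation
(`bot ∉ M`), `M` models the reduct `P^M`, and no proper subset of `M` does. -/
def SM {A : Type} (bot : A) (P : Set (Rule A)) : Set (Set A) :=
  {M | bot ∉ M ∧ modelsProg M (reduct P M) ∧ ∀ J, J ⊂ M → ¬ modelsProg J (reduct P M)}

/-- Cautious consequences: atoms belonging to every stable model of `P`. -/
def CC {A : Type} (bot : A) (P : Set (Rule A)) : Set A :=
  {a | ∀ M ∈ SM bot P, a ∈ M}

/-!
Stable models are pairwise ⊆-incomparable: if `N ⊆ M` are both stable, then `P^M ⊆ P^N`, so `N`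
is a model of `P^M` and minimality of `M` forces `N = M`. Hence a stable model `M` of `P` other than
`I_1, …, I_k` contains none of them and satisfies every added constraint. Since `M ⊨ R^M` iff
`M ⊨ R` for any program `R`, and adding rules can only shrink the set of models of the reduct, `M`
would stay stable for the extended program. So `SM(P) = {I_1, …, I_k}`.
-/

section StableModels

variable {A : Type} {P Q : Set (Rule A)} {I J M N : Set A}

theorem reduct_mono (hPQ : P ⊆ Q) : reduct P I ⊆ reduct Q I := by
  rintro _ ⟨r, hr, hneg, rfl⟩
  exact ⟨r, hPQ hr, hneg, rfl⟩

theorem reduct_anti (hIJ : I ⊆ J) : reduct P J ⊆ reduct P I := by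
  rintro _ ⟨r, hr, hneg, rfl⟩
  exact ⟨r, hr, fun a ha hI => hneg a ha (hIJ hI), rfl⟩

theorem modelsProg.mono (hQP : Q ⊆ P) (h : modelsProg I P) : modelsProg I Q :=
  fun r hr => h r (hQP hr)

theorem modelsProg_union_iff : modelsProg I (P ∪ Q) ↔ modelsProg I P ∧ modelsProg I Q :=
  ⟨fun h => ⟨h.mono Set.subset_union_left, h.mono Set.subset_union_right⟩,
    fun ⟨hP, hQ⟩ r hr => hr.elim (hP r) (hQ r)⟩

theorem modelsProg_reduct_self_iff : modelsProg I (reduct P I) ↔ modelsProg I P := by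
  constructor
  · intro h r hr ⟨hpos, hneg⟩
    exact h ⟨r.head, r.pos, ∅⟩ ⟨r, hr, hneg, rfl⟩ ⟨hpos, by simp⟩
  · rintro h _ ⟨r, hr, hneg, rfl⟩ ⟨hpos, -⟩
    exact h r hr ⟨hpos, hneg⟩

theorem CC_eq_sInter_SM (bot : A) (P : Set (Rule A)) : CC bot P = ⋂₀ SM bot P := rfl

theorem eq_of_subset_of_mem_SM {bot : A} (hN : N ∈ SM bot P) (hM : M ∈ SM bot P)
    (hNM : N ⊆ M) : N = M := by
  by_contra hne
  have hN_models : modelsProg N (reduct P M) := hN.2.1.mono (reduct_anti hNM)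
  exact hM.2.2 N (hNM.ssubset_of_ne hne) hN_models

theorem mem_SM_union_of_modelsProg {bot : A} (hM : M ∈ SM bot P) (hQ : modelsProg M Q) :
    M ∈ SM bot (P ∪ Q) := by
  obtain ⟨hbot, hmodels, hmin⟩ := hM
  refine ⟨hbot, ?_, fun J hJM hJ => hmin J hJM (hJ.mono (reduct_mono Set.subset_union_left))⟩
  rw [modelsProg_reduct_self_iff] at hmodels ⊢
  exact modelsProg_union_iff.2 ⟨hmodels, hQ⟩

theorem exists_eq_of_SM_union_constraints_eq_empty {ι : Type} {bot : A} {Is : ι → Finset A}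
    (hIs : ∀ j, (↑(Is j) : Set A) ∈ SM bot P)
    (h : SM bot (P ∪ Set.range fun j => Rule.mk bot (Is j) ∅) = ∅) (hM : M ∈ SM bot P) :
    ∃ j, M = (↑(Is j) : Set A) := by
  by_contra! hne
  have hconstraints : modelsProg M (Set.range fun j => Rule.mk bot (Is j) ∅) := by
    rintro _ ⟨j, rfl⟩ ⟨hsub, -⟩
    exact absurd (eq_of_subset_of_mem_SM (hIs j) hM hsub).symm (hne j)
  have hM' := mem_SM_union_of_modelsProg hM hconstraints
  rw [h] at hM'
  exact hM'

end StableModels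

theorem enumeration_of_models_correct_general {A : Type} (bot : A)
    (P : Set (Rule A))
    (k : ℕ)
    (Is : Fin k → Finset A) (hIs : ∀ j, (↑(Is j) : Set A) ∈ SM bot P)
    (h : SM bot (P ∪ Set.range fun j => Rule.mk bot (Is j) ∅) = ∅) :
    CC bot P = (⋂ j, (↑(Is j) : Set A)) ∧
    ∀ Q : Set A, Q ∩ CC bot P = Q ∩ ⋂ j, (↑(Is j) : Set A) := by
  have hSM : SM bot P = Set.range fun j => (↑(Is j) : Set A) :=
    Set.Subset.antisymm
      (fun M hM => exists_eq_of_SM_union_constraints_eq_empty hIs h hM |>.imp fun _ => Eq.symm)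
      (Set.range_subset_iff.2 hIs)
  have hCC : CC bot P = ⋂ j, (↑(Is j) : Set A) := by
    rw [CC_eq_sInter_SM, hSM, Set.sInter_range]
  exact ⟨hCC, fun Q => by rw [hCC]⟩

/-- Correctness of enumeration of models: if no further stable model exists after
eliminating `I_1, …, I_k` (`k ≥ 1`), then `CC P` is the intersection of the enumerated
models, and the answers among any candidate set `Q` are `Q ∩ I_1 ∩ … ∩ I_k`. -/
theorem enumeration_of_models_correct {A : Type} [Countable A] (bot : A)
    (P : Set (Rule A)) (hP : P.Finite)
    (k : ℕ) (hk : 1 ≤ k)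
    (Is : Fin k → Finset A) (hIs : ∀ j, (↑(Is j) : Set A) ∈ SM bot P)
    (h : SM bot (P ∪ Set.range fun j => Rule.mk bot (Is j) ∅) = ∅) :
    CC bot P = (⋂ j, (↑(Is j) : Set A)) ∧
    ∀ Q : Set A, Q ∩ CC bot P = Q ∩ ⋂ j, (↑(Is j) : Set A) :=
  enumeration_of_models_correct_general bot P k Is hIs h
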